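/- arXiv:1809.02027 — 3 statements merged into one kernel-verified Lean document; each statement's English description precedes it below -/
import Mathlib

section
/- The Airy-type oscillatory integral is uniformly bounded: there exists a constant C > 0 such that for every real a, |∫_ℝ exp(i(a·η + η³)) dη| ≤ C, where the integral is understood as an improper (oscillatory) integral. -/
open MeasureTheory Complex Filter Set intervalIntegral Topology
open scoped ComplexConjugate

/-!
Van der Corput's first derivative test: if `φ'` is monotone and `|φ'| ≥ λ > 0` on `[c, d]`,
integrating `e^{iφ}` by parts against `1 / (iφ')` gives `|∫_c^d e^{iφ}| ≤ 4 / λ`, because the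
remainder `∫ |(1/φ')'|` telescopes. For the Airy phase `φ(η) = aη + η³` we have `φ'' = 6η ≥ 0` on
`[0, ∞)`, and `|φ'| ≥ 3` off the interval of length 2 around the stationary point `√(-a/3)`, so
`∫_0^R e^{iφ}` is bounded independently of `a` and `R`. The same test, with `λ = φ'(N) → ∞`, shows
that `R ↦ ∫_0^R e^{iφ}` is Cauchy. Finally `e^{iφ}` is conjugate-symmetric, so
`∫_{-R}^R = 2 Re ∫_0^R`.
-/

section VanDerCorput

variable {φ φ' φ'' : ℝ → ℝ} {c d lam : ℝ}

lemma integral_div_sq_eq_inv_sub_inv (hφ' : ∀ x ∈ uIcc c d, HasDerivAt φ' (φ'' x) x)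
    (hφ''_cont : ContinuousOn φ'' (uIcc c d)) (hne : ∀ x ∈ uIcc c d, φ' x ≠ 0) :
    ∫ x in c..d, φ'' x / φ' x ^ 2 = (φ' c)⁻¹ - (φ' d)⁻¹ := by
  have hφ'_cont : ContinuousOn φ' (uIcc c d) :=
    fun x hx => (hφ' x hx).continuousAt.continuousWithinAt
  have hderiv : ∀ x ∈ uIcc c d, HasDerivAt (fun y => -(φ' y)⁻¹) (φ'' x / φ' x ^ 2) x :=
    fun x hx => ((hφ' x hx).inv (hne x hx)).neg.congr_deriv (by ring)
  rw [integral_eq_sub_of_hasDerivAt hderiv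
    ((hφ''_cont.div (hφ'_cont.pow 2) fun x hx => pow_ne_zero 2 (hne x hx)).intervalIntegrable)]
  ring

lemma integral_exp_mul_I_eq_by_parts (hφ : ∀ x ∈ uIcc c d, HasDerivAt φ (φ' x) x)
    (hφ' : ∀ x ∈ uIcc c d, HasDerivAt φ' (φ'' x) x)
    (hφ''_cont : ContinuousOn φ'' (uIcc c d)) (hne : ∀ x ∈ uIcc c d, φ' x ≠ 0) :
    ∫ x in c..d, exp (φ x * I) =
      -I * ↑(φ' d)⁻¹ * exp (φ d * I) - -I * ↑(φ' c)⁻¹ * exp (φ c * I) -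
        ∫ x in c..d, I * ↑(φ'' x / φ' x ^ 2) * exp (φ x * I) := by
  have hφ_cont : ContinuousOn φ (uIcc c d) :=
    fun x hx => (hφ x hx).continuousAt.continuousWithinAt
  have hφ'_cont : ContinuousOn φ' (uIcc c d) :=
    fun x hx => (hφ' x hx).continuousAt.continuousWithinAt
  have hu : ∀ x ∈ uIcc c d,
      HasDerivAt (fun y => -I * ↑(φ' y)⁻¹) (I * ↑(φ'' x / φ' x ^ 2)) x := fun x hx =>
    ((((hφ' x hx).inv (hne x hx)).ofReal_comp).const_mul (-I)).congr_deriv (by push_cast; ring)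
  have hv : ∀ x ∈ uIcc c d,
      HasDerivAt (fun y => exp (φ y * I)) (exp (φ x * I) * (φ' x * I)) x :=
    fun x hx => ((hφ x hx).ofReal_comp.mul_const I).cexp
  have hu' : IntervalIntegrable (fun x => I * ↑(φ'' x / φ' x ^ 2)) volume c d :=
    ContinuousOn.intervalIntegrable <| continuousOn_const.mul <|
      continuous_ofReal.comp_continuousOn <|
        hφ''_cont.div (hφ'_cont.pow 2) fun x hx => pow_ne_zero 2 (hne x hx)
  have hv' : IntervalIntegrable (fun x => exp (φ x * I) * (φ' x * I)) volume c d := by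
    apply ContinuousOn.intervalIntegrable
    fun_prop
  rw [← integral_mul_deriv_eq_deriv_mul hu hv hu' hv']
  refine integral_congr fun x hx => ?_
  have : (φ' x : ℂ) ≠ 0 := ofReal_ne_zero.mpr (hne x hx)
  push_cast
  field_simp
  rw [I_sq]
  ring

theorem norm_integral_exp_mul_I_le (hlam : 0 < lam)
    (hφ : ∀ x ∈ uIcc c d, HasDerivAt φ (φ' x) x)
    (hφ' : ∀ x ∈ uIcc c d, HasDerivAt φ' (φ'' x) x)
    (hφ''_cont : ContinuousOn φ'' (uIcc c d)) (hφ''_nonneg : ∀ x ∈ uIcc c d, 0 ≤ φ'' x)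
    (hlam_le : ∀ x ∈ uIcc c d, lam ≤ |φ' x|) :
    ‖∫ x in c..d, exp (φ x * I)‖ ≤ 4 / lam := by
  have hne : ∀ x ∈ uIcc c d, φ' x ≠ 0 := fun x hx => abs_pos.mp (hlam.trans_le (hlam_le x hx))
  have hinv_le : ∀ x ∈ uIcc c d, |(φ' x)⁻¹| ≤ lam⁻¹ := fun x hx => by
    rw [abs_inv]; exact inv_anti₀ hlam (hlam_le x hx)
  have hboundary : ∀ x ∈ uIcc c d, ‖-I * ↑(φ' x)⁻¹ * exp (φ x * I)‖ ≤ lam⁻¹ := fun x hx => by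
    simpa [norm_exp_ofReal_mul_I] using hinv_le x hx
  have hremainder : ‖∫ x in c..d, I * ↑(φ'' x / φ' x ^ 2) * exp (φ x * I)‖ ≤ 2 * lam⁻¹ :=
    calc ‖∫ x in c..d, I * ↑(φ'' x / φ' x ^ 2) * exp (φ x * I)‖
        ≤ |∫ x in c..d, ‖I * ↑(φ'' x / φ' x ^ 2) * exp (φ x * I)‖| := by
          exact norm_integral_le_abs_integral_norm
      _ = |∫ x in c..d, φ'' x / φ' x ^ 2| := congrArg _ <| integral_congr fun x hx => by
          simp [norm_exp_ofReal_mul_I, abs_of_nonneg (hφ''_nonneg x hx)]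
      _ = |(φ' c)⁻¹ - (φ' d)⁻¹| := by rw [integral_div_sq_eq_inv_sub_inv hφ' hφ''_cont hne]
      _ ≤ |(φ' c)⁻¹| + |(φ' d)⁻¹| := abs_sub _ _
      _ ≤ 2 * lam⁻¹ := by linarith [hinv_le c left_mem_uIcc, hinv_le d right_mem_uIcc]
  rw [integral_exp_mul_I_eq_by_parts hφ hφ' hφ''_cont hne]
  calc _ ≤ ‖-I * ↑(φ' d)⁻¹ * exp (φ d * I)‖ + ‖-I * ↑(φ' c)⁻¹ * exp (φ c * I)‖ +
        ‖∫ x in c..d, I * ↑(φ'' x / φ' x ^ 2) * exp (φ x * I)‖ :=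
        (norm_sub_le _ _).trans (by gcongr; exact norm_sub_le _ _)
    _ ≤ 4 / lam := by
        linarith [hboundary d right_mem_uIcc, hboundary c left_mem_uIcc, div_eq_mul_inv 4 lam]

end VanDerCorput

noncomputable def airyIntegrand (a η : ℝ) : ℂ := exp (I * ((a : ℂ) * η + (η : ℂ) ^ 3))

lemma airyIntegrand_eq (a η : ℝ) : airyIntegrand a η = exp (↑(a * η + η ^ 3) * I) := by
  rw [airyIntegrand]; push_cast; ring_nf

lemma norm_airyIntegrand (a η : ℝ) : ‖airyIntegrand a η‖ = 1 := by
  rw [airyIntegrand_eq, norm_exp_ofReal_mul_I]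

lemma continuous_airyIntegrand (a : ℝ) : Continuous (airyIntegrand a) := by
  unfold airyIntegrand; fun_prop

lemma airyIntegrand_neg (a η : ℝ) : airyIntegrand a (-η) = conj (airyIntegrand a η) := by
  simp only [airyIntegrand_eq, ← exp_conj, map_mul, conj_ofReal, conj_I]
  push_cast; ring_nf

lemma integral_airyIntegrand_symm (a R : ℝ) :
    ∫ η in -R..R, airyIntegrand a η =
      conj (∫ η in 0..R, airyIntegrand a η) + ∫ η in 0..R, airyIntegrand a η := by
  have hint : ∀ x y, IntervalIntegrable (airyIntegrand a) volume x y :=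
    (continuous_airyIntegrand a).intervalIntegrable
  rw [← integral_add_adjacent_intervals (hint (-R) 0) (hint 0 R), ← intervalIntegral_conj]
  congr 1
  simpa only [neg_zero, airyIntegrand_neg] using
    (integral_comp_neg (a := 0) (b := R) (airyIntegrand a)).symm

theorem norm_integral_airyIntegrand_le {a c d lam : ℝ} (hc : 0 ≤ c) (hcd : c ≤ d) (hlam : 0 < lam)
    (hlam_le : ∀ η ∈ Icc c d, lam ≤ |3 * η ^ 2 + a|) :
    ‖∫ η in c..d, airyIntegrand a η‖ ≤ 4 / lam := by
  have hIcc : uIcc c d = Icc c d := uIcc_of_le hcd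
  simp only [airyIntegrand_eq]
  refine norm_integral_exp_mul_I_le (φ' := fun η => 3 * η ^ 2 + a) (φ'' := fun η => 6 * η)
    hlam (fun η _ => ?_) (fun η _ => ?_) (by fun_prop) (fun η hη => ?_) (hIcc ▸ hlam_le)
  · exact (((hasDerivAt_id' η).const_mul a).add (hasDerivAt_pow 3 η)).congr_deriv (by ring)
  · exact (((hasDerivAt_pow 2 η).const_mul 3).add_const a).congr_deriv (by ring)
  · linarith [(hIcc ▸ hη).1]

theorem tendsto_integral_airyIntegrand (a : ℝ) :
    ∃ L, Tendsto (fun R => ∫ η in 0..R, airyIntegrand a η) atTop (𝓝 L) := by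
  refine cauchySeq_tendsto_of_complete (Metric.cauchySeq_iff'.2 fun ε hε => ?_)
  have hφ' : Tendsto (fun N : ℝ => 3 * N ^ 2 + a) atTop atTop :=
    ((tendsto_pow_atTop two_ne_zero).const_mul_atTop three_pos).atTop_add tendsto_const_nhds
  obtain ⟨N, hN, hφ'N, hNε⟩ := ((eventually_ge_atTop 0).and ((hφ'.eventually_gt_atTop 0).and
    ((hφ'.const_div_atTop 4).eventually (gt_mem_nhds hε)))).exists
  refine ⟨N, fun R hR => ?_⟩
  have hint : ∀ x y, IntervalIntegrable (airyIntegrand a) volume x y :=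
    (continuous_airyIntegrand a).intervalIntegrable
  rw [dist_eq_norm, integral_interval_sub_left (hint 0 R) (hint 0 N)]
  refine (norm_integral_airyIntegrand_le hN hR hφ'N fun η hη => ?_).trans_lt hNε
  have : 3 * N ^ 2 + a ≤ 3 * η ^ 2 + a := by nlinarith [hη.1]
  exact this.trans (le_abs_self _)

theorem eventually_norm_integral_airyIntegrand_le (a : ℝ) :
    ∀ᶠ R in atTop, ‖∫ η in 0..R, airyIntegrand a η‖ ≤ 5 := by
  -- for `a ≤ -3`, `s` is the stationary point; otherwise `s = 1` and `[0, s - 1]` is trivial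
  set s := √(max 1 (-a / 3))
  have hs : 1 ≤ s := Real.one_le_sqrt.2 (le_max_left _ _)
  have hs_sq : s ^ 2 = max 1 (-a / 3) := Real.sq_sqrt (zero_le_one.trans (le_max_left _ _))
  have ha : -a ≤ 3 * s ^ 2 := by linarith [le_max_right 1 (-a / 3)]
  filter_upwards [eventually_ge_atTop (s + 1)] with R hR
  have hint : ∀ x y, IntervalIntegrable (airyIntegrand a) volume x y :=
    (continuous_airyIntegrand a).intervalIntegrable
  have hlower : ‖∫ η in 0..s - 1, airyIntegrand a η‖ ≤ 4 / 3 := by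
    rcases le_or_gt a (-3) with ha3 | ha3
    · have hs_sq' : 3 * s ^ 2 = -a := by rw [hs_sq, max_eq_right (by linarith)]; ring
      refine norm_integral_airyIntegrand_le le_rfl (by linarith) three_pos fun η hη => ?_
      rw [abs_of_neg (by nlinarith [hη.1, hη.2])]
      nlinarith [hη.1, hη.2]
    · have : s = 1 := by simp [s, max_eq_left (by linarith : -a / 3 ≤ 1)]
      rw [this, sub_self, integral_same, norm_zero]
      norm_num
  have hmiddle : ‖∫ η in s - 1..s + 1, airyIntegrand a η‖ ≤ 2 := by
    refine (norm_integral_le_of_norm_le_const fun η _ => (norm_airyIntegrand a η).le).trans_eq ?_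
    rw [one_mul, show s + 1 - (s - 1) = 2 by ring, abs_two]
  have hupper : ‖∫ η in s + 1..R, airyIntegrand a η‖ ≤ 4 / 3 :=
    norm_integral_airyIntegrand_le (by linarith) hR three_pos fun η hη =>
      (by nlinarith [hη.1] : (3 : ℝ) ≤ _).trans (le_abs_self _)
  rw [← integral_add_adjacent_intervals (hint 0 (s - 1)) (hint (s - 1) R),
    ← integral_add_adjacent_intervals (hint (s - 1) (s + 1)) (hint (s + 1) R)]
  calc _ ≤ ‖∫ η in 0..s - 1, airyIntegrand a η‖ + (‖∫ η in s - 1..s + 1, airyIntegrand a η‖ +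
        ‖∫ η in s + 1..R, airyIntegrand a η‖) :=
        (norm_add_le _ _).trans (by gcongr; exact norm_add_le _ _)
    _ ≤ 5 := by linarith

theorem airy_integral_uniformly_bounded :
    ∃ C : ℝ, 0 < C ∧ ∀ a : ℝ, ∃ L : ℂ,
      Tendsto (fun R : ℝ => ∫ η in (-R)..R, Complex.exp (Complex.I * ((a : ℂ) * η + (η : ℂ) ^ 3)))
        atTop (nhds L) ∧ ‖L‖ ≤ C := by
  refine ⟨10, by norm_num, fun a => ?_⟩
  obtain ⟨L, hL⟩ := tendsto_integral_airyIntegrand a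
  have hL_le : ‖L‖ ≤ 5 := le_of_tendsto hL.norm (eventually_norm_integral_airyIntegrand_le a)
  refine ⟨conj L + L, ?_, ?_⟩
  · refine (((continuous_conj.tendsto L).comp hL).add hL).congr fun R => ?_
    exact (integral_airyIntegrand_symm a R).symm
  · calc ‖conj L + L‖ ≤ ‖conj L‖ + ‖L‖ := norm_add_le _ _
      _ ≤ 10 := by rw [RCLike.norm_conj]; linarith
end

section
/- Van der Corput estimate with second-derivative lower bound and amplitude: let Φ : [a,b] → ℝ be C² with |Φ''(ξ)| ≥ λ > 0 for all ξ ∈ [a,b], and let ψ : [a,b] → ℂ be C¹. Then |∫_a^b ψ(ξ) e^{iΦ(ξ)} dξ| ≤ C·λ^{−1/2}·(‖ψ‖_∞ + ∫_a^b |ψ'(ξ)| dξ) for an absolute constant C. -/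
/-!
Integrating by parts against `1 / Φ'` bounds `∫ e^{iΦ}` by `4 / μ` on any interval where `Φ'` is
monotone and `|Φ'| ≥ μ`. If `Φ'' ≥ λ`, then `|Φ' x| ≥ λ |x - x₀|` for a suitable `x₀`, so
`|Φ'| ≥ √λ` outside a window of length `2 / √λ` around `x₀`, and the three pieces give `10 / √λ`.
By Darboux's theorem `Φ''` has constant sign, and the case `Φ'' ≤ -λ` follows by conjugation.
The amplitude `ψ` is then removed by a second integration by parts, against the primitive
`t ↦ ∫_a^t e^{iΦ}`, which the same bound controls uniformly in `t`.
-/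

open MeasureTheory Complex Set intervalIntegral

theorem derivWithin_Icc_eventuallyEq_deriv {E : Type*} [NormedAddCommGroup E] [NormedSpace ℝ E]
    {f : ℝ → E} {a b x : ℝ} (hx : x ∈ Ioo a b) : derivWithin f (Icc a b) =ᶠ[nhds x] deriv f :=
  Filter.eventually_of_mem (Ioo_mem_nhds hx.1 hx.2) fun _ hy =>
    derivWithin_of_mem_nhds (Icc_mem_nhds hy.1 hy.2)

theorem derivWithin_derivWithin_Icc_of_mem_Ioo {E : Type*} [NormedAddCommGroup E]
    [NormedSpace ℝ E] {f : ℝ → E} {a b x : ℝ} (hx : x ∈ Ioo a b) :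
    derivWithin (derivWithin f (Icc a b)) (Icc a b) x = deriv (deriv f) x := by
  rw [(derivWithin_Icc_eventuallyEq_deriv hx).eq_of_nhds,
    (derivWithin_Icc_eventuallyEq_deriv hx).deriv_eq]

theorem DifferentiableOn.hasDerivAt_derivWithin_Icc {E : Type*} [NormedAddCommGroup E]
    [NormedSpace ℝ E] {f : ℝ → E} {a b x : ℝ} (hf : DifferentiableOn ℝ f (Icc a b))
    (hx : x ∈ Ioo a b) : HasDerivAt f (derivWithin f (Icc a b) x) x :=
  (hf x (Ioo_subset_Icc_self hx)).hasDerivWithinAt.hasDerivAt (Icc_mem_nhds hx.1 hx.2)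

theorem norm_integral_smul_deriv_le {𝕜 E : Type*} [NontriviallyNormedField 𝕜] [NormedAlgebra ℝ 𝕜]
    [NormedAddCommGroup E] [NormedSpace 𝕜 E] [NormedSpace ℝ E] [CompleteSpace E]
    [IsScalarTower ℝ 𝕜 E] {a b B : ℝ} (hab : a ≤ b) {u u' : ℝ → 𝕜} {v v' : ℝ → E}
    (hu : ContinuousOn u (Icc a b)) (hv : ContinuousOn v (Icc a b))
    (huu' : ∀ x ∈ Ioo a b, HasDerivAt u (u' x) x) (hvv' : ∀ x ∈ Ioo a b, HasDerivAt v (v' x) x)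
    (hu' : IntervalIntegrable u' volume a b) (hv' : IntervalIntegrable v' volume a b)
    (hvB : ∀ x ∈ Icc a b, ‖v x‖ ≤ B) :
    ‖∫ x in a..b, u x • v' x‖ ≤ ‖u b‖ * ‖v b‖ + ‖u a‖ * ‖v a‖ + B * ∫ x in a..b, ‖u' x‖ := by
  rw [integral_smul_deriv_eq_deriv_smul_of_hasDerivAt (by rwa [uIcc_of_le hab])
    (by rwa [uIcc_of_le hab]) (by rwa [min_eq_left hab, max_eq_right hab])
    (by rwa [min_eq_left hab, max_eq_right hab]) hu' hv', ← intervalIntegral.integral_const_mul]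
  have hrest : ‖∫ x in a..b, u' x • v x‖ ≤ ∫ x in a..b, B * ‖u' x‖ := by
    refine norm_integral_le_of_norm_le hab (Filter.Eventually.of_forall fun x hx => ?_)
      (hu'.norm.const_mul B)
    rw [norm_smul, mul_comm]
    exact mul_le_mul_of_nonneg_right (hvB x (Ioc_subset_Icc_self hx)) (norm_nonneg _)
  calc _ ≤ ‖u b • v b‖ + ‖u a • v a‖ + ‖∫ x in a..b, u' x • v x‖ :=
        (norm_sub_le _ _).trans (add_le_add_left (norm_sub_le _ _) _)
    _ ≤ _ := by rw [norm_smul, norm_smul]; linarith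

theorem norm_integral_smul_le_of_norm_primitive_le {𝕜 E : Type*} [NontriviallyNormedField 𝕜]
    [NormedAlgebra ℝ 𝕜] [NormedAddCommGroup E] [NormedSpace 𝕜 E] [NormedSpace ℝ E]
    [CompleteSpace E] [IsScalarTower ℝ 𝕜 E] {a b B : ℝ} (hab : a ≤ b) {ψ ψ' : ℝ → 𝕜}
    {f : ℝ → E} (hψ : ContinuousOn ψ (Icc a b)) (hψψ' : ∀ x ∈ Ioo a b, HasDerivAt ψ (ψ' x) x)
    (hψ' : IntervalIntegrable ψ' volume a b) (hf : ContinuousOn f (Icc a b))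
    (hB : ∀ t ∈ Icc a b, ‖∫ x in a..t, f x‖ ≤ B) :
    ‖∫ x in a..b, ψ x • f x‖ ≤ B * (‖ψ b‖ + ∫ x in a..b, ‖ψ' x‖) := by
  have hF : ContinuousOn (fun t => ∫ x in a..t, f x) (Icc a b) := by
    rw [← uIcc_of_le hab] at hf ⊢
    exact continuousOn_primitive_interval hf.integrableOn_uIcc
  have hFf : ∀ t ∈ Ioo a b, HasDerivAt (fun t => ∫ x in a..t, f x) (f t) t := fun t ht =>
    integral_hasDerivAt_right
      ((hf.mono (Icc_subset_Icc_right ht.2.le)).intervalIntegrable_of_Icc ht.1.le)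
      ((hf.mono Ioo_subset_Icc_self).stronglyMeasurableAtFilter isOpen_Ioo t ht)
      (hf.continuousAt (Icc_mem_nhds ht.1 ht.2))
  have := norm_integral_smul_deriv_le hab hψ hF hψψ' hFf hψ' (hf.intervalIntegrable_of_Icc hab) hB
  rw [integral_same, norm_zero, mul_zero, add_zero] at this
  have := mul_le_mul_of_nonneg_left (hB b (right_mem_Icc.2 hab)) (norm_nonneg (ψ b))
  linarith

theorem integral_norm_deriv_eq_sub_of_deriv_nonpos {a b : ℝ} (hab : a ≤ b) {w w' : ℝ → ℝ}
    (hw : ContinuousOn w (Icc a b)) (hww' : ∀ x ∈ Ioo a b, HasDerivAt w (w' x) x)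
    (hw'_nonpos : ∀ x ∈ Ioo a b, w' x ≤ 0) :
    IntervalIntegrable w' volume a b ∧ ∫ x in a..b, ‖w' x‖ = w a - w b := by
  have hint : IntervalIntegrable (-w') volume a b := by
    refine intervalIntegrable_deriv_of_nonneg (by rw [uIcc_of_le hab]; exact hw.neg) ?_ ?_ <;>
      rw [min_eq_left hab, max_eq_right hab]
    · exact fun x hx => (hww' x hx).neg
    · exact fun x hx => neg_nonneg.2 (hw'_nonpos x hx)
  have hint' : IntervalIntegrable w' volume a b := by simpa only [neg_neg] using hint.neg
  refine ⟨hint', ?_⟩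
  rw [integral_congr_Ioo_of_le (g := fun x => -w' x) hab fun x hx =>
    by simp only [Real.norm_eq_abs, abs_of_nonpos (hw'_nonpos x hx)],
    intervalIntegral.integral_neg, integral_eq_sub_of_hasDerivAt_of_le hab hw hww' hint']
  ring

theorem exists_mem_Icc_mul_abs_sub_le_abs {a b c : ℝ} (hab : a ≤ b) {g : ℝ → ℝ}
    (hg : ContinuousOn g (Icc a b))
    (hgrowth : ∀ x ∈ Icc a b, ∀ y ∈ Icc a b, x ≤ y → c * (y - x) ≤ g y - g x) :
    ∃ x₀ ∈ Icc a b, ∀ x ∈ Icc a b, c * |x - x₀| ≤ |g x| := by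
  have ha := left_mem_Icc.2 hab
  have hb := right_mem_Icc.2 hab
  by_cases hga : 0 ≤ g a
  · refine ⟨a, ha, fun x hx => ?_⟩
    rw [abs_of_nonneg (sub_nonneg.2 hx.1)]
    linarith [hgrowth a ha x hx hx.1, le_abs_self (g x)]
  by_cases hgb : g b ≤ 0
  · refine ⟨b, hb, fun x hx => ?_⟩
    rw [abs_sub_comm, abs_of_nonneg (sub_nonneg.2 hx.2)]
    linarith [hgrowth x hx b hb hx.2, neg_le_abs (g x)]
  obtain ⟨x₀, hx₀, hgx₀⟩ := intermediate_value_Icc hab hg ⟨(not_le.1 hga).le, (not_le.1 hgb).le⟩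
  refine ⟨x₀, hx₀, fun x hx => ?_⟩
  rcases le_total x x₀ with h | h
  · rw [abs_sub_comm, abs_of_nonneg (sub_nonneg.2 h)]
    linarith [hgrowth x hx x₀ hx₀ h, neg_le_abs (g x)]
  · rw [abs_of_nonneg (sub_nonneg.2 h)]
    linarith [hgrowth x₀ hx₀ x hx h, le_abs_self (g x)]

theorem norm_integral_cexp_le_of_le_abs_deriv {a b μ : ℝ} (hab : a ≤ b) (hμ : 0 < μ)
    {Φ Φ' Φ'' : ℝ → ℝ} (hΦ : ContinuousOn Φ (Icc a b)) (hΦ' : ContinuousOn Φ' (Icc a b))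
    (hΦΦ' : ∀ x ∈ Ioo a b, HasDerivAt Φ (Φ' x) x)
    (hΦ'Φ'' : ∀ x ∈ Ioo a b, HasDerivAt Φ' (Φ'' x) x) (hΦ''_nonneg : ∀ x ∈ Ioo a b, 0 ≤ Φ'' x)
    (hΦ'_ge : ∀ x ∈ Icc a b, μ ≤ |Φ' x|) :
    ‖∫ x in a..b, exp (I * Φ x)‖ ≤ 4 / μ := by
  have hΦ'_ne : ∀ x ∈ Icc a b, Φ' x ≠ 0 := fun x hx h0 => by
    have := hΦ'_ge x hx; rw [h0, abs_zero] at this; linarith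
  have hinv_le : ∀ x ∈ Icc a b, |(Φ' x)⁻¹| ≤ 1 / μ := fun x hx => by
    rw [abs_inv, one_div]; exact inv_anti₀ hμ (hΦ'_ge x hx)
  -- integrate by parts with `u = 1 / Φ'` and `v = -i e^{iΦ}`, so that `u v' = e^{iΦ}`
  have hu' : ∀ x ∈ Ioo a b, HasDerivAt Φ'⁻¹ (-(Φ'' x / Φ' x ^ 2)) x := fun x hx => by
    simpa only [neg_div] using (hΦ'Φ'' x hx).inv (hΦ'_ne x (Ioo_subset_Icc_self hx))
  have hv' : ∀ x ∈ Ioo a b, HasDerivAt (fun y => -I * exp (I * Φ y))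
      (-I * (exp (I * Φ x) * (I * Φ' x))) x := fun x hx =>
    (((hΦΦ' x hx).ofReal_comp.const_mul I).cexp).const_mul (-I)
  obtain ⟨hu'_int, hvar⟩ := integral_norm_deriv_eq_sub_of_deriv_nonpos hab (hΦ'.inv₀ hΦ'_ne) hu'
    fun x hx => neg_nonpos.2 (div_nonneg (hΦ''_nonneg x hx) (sq_nonneg _))
  have huv' : ∫ x in a..b, Φ'⁻¹ x • (-I * (exp (I * Φ x) * (I * Φ' x))) =
      ∫ x in a..b, exp (I * Φ x) := by
    refine integral_congr fun x hx => ?_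
    rw [uIcc_of_le hab] at hx
    have : (Φ' x : ℂ) ≠ 0 := ofReal_ne_zero.2 (hΦ'_ne x hx)
    rw [Pi.inv_apply, real_smul, ofReal_inv]
    calc _ = -(I * I) * exp (I * Φ x) * ((Φ' x : ℂ)⁻¹ * Φ' x) := by ring
      _ = _ := by rw [I_mul_I, inv_mul_cancel₀ this]; ring
  have hibp := norm_integral_smul_deriv_le hab (B := 1) (hΦ'.inv₀ hΦ'_ne) (by fun_prop) hu' hv'
    hu'_int (ContinuousOn.intervalIntegrable (by rw [uIcc_of_le hab]; fun_prop))
    fun x _ => by rw [norm_mul, norm_neg, norm_I, norm_exp_I_mul_ofReal, one_mul]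
  rw [huv', hvar] at hibp
  simp only [Pi.inv_apply, Real.norm_eq_abs, norm_mul, norm_neg, norm_I, norm_exp_I_mul_ofReal,
    one_mul, mul_one] at hibp
  have ha := hinv_le a (left_mem_Icc.2 hab)
  have hb := hinv_le b (right_mem_Icc.2 hab)
  linarith [le_abs_self (Φ' a)⁻¹, neg_le_abs (Φ' b)⁻¹, show 4 / μ = 4 * (1 / μ) by ring]

theorem norm_integral_cexp_le_of_le_abs_deriv_off_window {a b μ δ x₀ : ℝ} (hab : a ≤ b)
    (hμ : 0 < μ) (hδ : 0 ≤ δ) (hx₀ : x₀ ∈ Icc a b) {Φ Φ' Φ'' : ℝ → ℝ}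
    (hΦ : ContinuousOn Φ (Icc a b)) (hΦ' : ContinuousOn Φ' (Icc a b))
    (hΦΦ' : ∀ x ∈ Ioo a b, HasDerivAt Φ (Φ' x) x)
    (hΦ'Φ'' : ∀ x ∈ Ioo a b, HasDerivAt Φ' (Φ'' x) x) (hΦ''_nonneg : ∀ x ∈ Ioo a b, 0 ≤ Φ'' x)
    (hΦ'_ge : ∀ x ∈ Icc a b, δ ≤ |x - x₀| → μ ≤ |Φ' x|) :
    ‖∫ x in a..b, exp (I * Φ x)‖ ≤ 8 / μ + 2 * δ := by
  have hint : ∀ s ∈ Icc a b, ∀ t ∈ Icc a b,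
      IntervalIntegrable (fun x => exp (I * Φ x)) volume s t := fun s hs t ht =>
    ((show ContinuousOn (fun x => exp (I * Φ x)) (Icc a b) by fun_prop).mono
      (uIcc_subset_Icc hs ht)).intervalIntegrable
  have houter : ∀ s t, a ≤ s → s ≤ t → t ≤ b → (∀ x ∈ Icc s t, δ ≤ |x - x₀|) →
      ‖∫ x in s..t, exp (I * Φ x)‖ ≤ 4 / μ := by
    intro s t has hst htb hfar
    have hsub : Icc s t ⊆ Icc a b := Icc_subset_Icc has htb
    have hsub' : Ioo s t ⊆ Ioo a b := Ioo_subset_Ioo has htb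
    exact norm_integral_cexp_le_of_le_abs_deriv hst hμ (hΦ.mono hsub) (hΦ'.mono hsub)
      (fun x hx => hΦΦ' x (hsub' hx)) (fun x hx => hΦ'Φ'' x (hsub' hx))
      (fun x hx => hΦ''_nonneg x (hsub' hx)) fun x hx => hΦ'_ge x (hsub hx) (hfar x hx)
  set p := max a (x₀ - δ)
  set q := min b (x₀ + δ)
  have hpx₀ : p ≤ x₀ := max_le hx₀.1 (by linarith)
  have hx₀q : x₀ ≤ q := le_min hx₀.2 (by linarith)
  have hp : p ∈ Icc a b := ⟨le_max_left _ _, hpx₀.trans hx₀.2⟩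
  have hq : q ∈ Icc a b := ⟨hx₀.1.trans hx₀q, min_le_left _ _⟩
  have hleft : ‖∫ x in a..p, exp (I * Φ x)‖ ≤ 4 / μ := by
    rcases le_total (x₀ - δ) a with h | h
    · rw [show p = a from max_eq_left h, integral_same, norm_zero]; positivity
    · refine houter a p le_rfl hp.1 hp.2 fun x hx => ?_
      have : x ≤ x₀ - δ := hx.2.trans_eq (max_eq_right h)
      rw [abs_sub_comm, abs_of_nonneg] <;> linarith
  have hright : ‖∫ x in q..b, exp (I * Φ x)‖ ≤ 4 / μ := by
    rcases le_total b (x₀ + δ) with h | h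
    · rw [show q = b from min_eq_left h, integral_same, norm_zero]; positivity
    · refine houter q b hq.1 hq.2 le_rfl fun x hx => ?_
      have : x₀ + δ ≤ x := (min_eq_right h).symm.trans_le hx.1
      rw [abs_of_nonneg] <;> linarith
  have hmiddle : ‖∫ x in p..q, exp (I * Φ x)‖ ≤ 2 * δ := by
    refine (norm_integral_le_of_norm_le_const fun x _ => (norm_exp_I_mul_ofReal (Φ x)).le).trans ?_
    rw [one_mul, abs_of_nonneg (by linarith)]
    linarith [le_max_right a (x₀ - δ), min_le_right b (x₀ + δ)]
  have ha := left_mem_Icc.2 hab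
  have hb := right_mem_Icc.2 hab
  rw [← integral_add_adjacent_intervals (hint a ha p hp) (hint p hp b hb),
    ← integral_add_adjacent_intervals (hint p hp q hq) (hint q hq b hb), ← add_assoc]
  calc _ ≤ _ := norm_add₃_le
    _ ≤ 4 / μ + 2 * δ + 4 / μ := by gcongr
    _ = 8 / μ + 2 * δ := by ring

theorem norm_integral_cexp_le_of_le_second_deriv {a b lam : ℝ} (hab : a ≤ b) (hlam : 0 < lam)
    {Φ Φ' Φ'' : ℝ → ℝ} (hΦ : ContinuousOn Φ (Icc a b)) (hΦ' : ContinuousOn Φ' (Icc a b))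
    (hΦΦ' : ∀ x ∈ Ioo a b, HasDerivAt Φ (Φ' x) x)
    (hΦ'Φ'' : ∀ x ∈ Ioo a b, HasDerivAt Φ' (Φ'' x) x) (hΦ''_ge : ∀ x ∈ Ioo a b, lam ≤ Φ'' x) :
    ‖∫ x in a..b, exp (I * Φ x)‖ ≤ 10 / √lam := by
  have hμ : 0 < √lam := Real.sqrt_pos.2 hlam
  have hgrowth : ∀ x ∈ Icc a b, ∀ y ∈ Icc a b, x ≤ y → lam * (y - x) ≤ Φ' y - Φ' x := by
    refine (convex_Icc a b).mul_sub_le_image_sub_of_le_deriv hΦ' ?_ ?_ <;> rw [interior_Icc]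
    · exact fun x hx => (hΦ'Φ'' x hx).differentiableAt.differentiableWithinAt
    · exact fun x hx => (hΦ'Φ'' x hx).deriv ▸ hΦ''_ge x hx
  obtain ⟨x₀, hx₀, hΦ'_ge⟩ := exists_mem_Icc_mul_abs_sub_le_abs hab hΦ' hgrowth
  have hΦ'_off_window : ∀ x ∈ Icc a b, 1 / √lam ≤ |x - x₀| → √lam ≤ |Φ' x| :=
    fun x hx hfar => calc
      √lam = lam * (1 / √lam) := by rw [mul_one_div, Real.div_sqrt]
      _ ≤ lam * |x - x₀| := mul_le_mul_of_nonneg_left hfar hlam.le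
      _ ≤ |Φ' x| := hΦ'_ge x hx
  calc _ ≤ 8 / √lam + 2 * (1 / √lam) :=
        norm_integral_cexp_le_of_le_abs_deriv_off_window hab hμ (by positivity) hx₀ hΦ hΦ' hΦΦ'
          hΦ'Φ'' (fun x hx => hlam.le.trans (hΦ''_ge x hx)) hΦ'_off_window
    _ = 10 / √lam := by ring

theorem norm_integral_cexp_neg (Φ : ℝ → ℝ) (a b : ℝ) :
    ‖∫ x in a..b, exp (I * ↑(-Φ x))‖ = ‖∫ x in a..b, exp (I * Φ x)‖ := by
  conv_rhs => rw [← RCLike.norm_conj, ← intervalIntegral_conj]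
  congr 2 with x
  rw [← exp_conj, map_mul, conj_I, conj_ofReal, ofReal_neg]
  ring_nf

theorem norm_integral_cexp_le_of_le_abs_second_deriv {a b lam : ℝ} (hab : a ≤ b) (hlam : 0 < lam)
    {Φ Φ' Φ'' : ℝ → ℝ} (hΦ : ContinuousOn Φ (Icc a b)) (hΦ' : ContinuousOn Φ' (Icc a b))
    (hΦΦ' : ∀ x ∈ Ioo a b, HasDerivAt Φ (Φ' x) x)
    (hΦ'Φ'' : ∀ x ∈ Ioo a b, HasDerivAt Φ' (Φ'' x) x) (hΦ''_ge : ∀ x ∈ Ioo a b, lam ≤ |Φ'' x|) :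
    ‖∫ x in a..b, exp (I * Φ x)‖ ≤ 10 / √lam := by
  have hΦ''_ne : ∀ x ∈ Ioo a b, Φ'' x ≠ 0 := fun x hx h0 => by
    have := hΦ''_ge x hx; rw [h0, abs_zero] at this; linarith
  rcases hasDerivWithinAt_forall_lt_or_forall_gt_of_forall_ne (convex_Ioo a b)
    (fun x hx => (hΦ'Φ'' x hx).hasDerivWithinAt) hΦ''_ne with hneg | hpos
  · rw [← norm_integral_cexp_neg]
    exact norm_integral_cexp_le_of_le_second_deriv hab hlam hΦ.neg hΦ'.neg
      (fun x hx => (hΦΦ' x hx).neg) (fun x hx => (hΦ'Φ'' x hx).neg)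
      fun x hx => (hΦ''_ge x hx).trans_eq (abs_of_neg (hneg x hx))
  · exact norm_integral_cexp_le_of_le_second_deriv hab hlam hΦ hΦ' hΦΦ' hΦ'Φ''
      fun x hx => (hΦ''_ge x hx).trans_eq (abs_of_pos (hpos x hx))

theorem norm_integral_mul_cexp_le_of_le_abs_second_deriv {a b lam : ℝ} (hab : a ≤ b)
    (hlam : 0 < lam) {Φ Φ' Φ'' : ℝ → ℝ} {ψ ψ' : ℝ → ℂ} (hΦ : ContinuousOn Φ (Icc a b))
    (hΦ' : ContinuousOn Φ' (Icc a b)) (hΦΦ' : ∀ x ∈ Ioo a b, HasDerivAt Φ (Φ' x) x)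
    (hΦ'Φ'' : ∀ x ∈ Ioo a b, HasDerivAt Φ' (Φ'' x) x) (hΦ''_ge : ∀ x ∈ Ioo a b, lam ≤ |Φ'' x|)
    (hψ : ContinuousOn ψ (Icc a b)) (hψψ' : ∀ x ∈ Ioo a b, HasDerivAt ψ (ψ' x) x)
    (hψ' : IntervalIntegrable ψ' volume a b) :
    ‖∫ x in a..b, ψ x * exp (I * Φ x)‖ ≤ 10 / √lam * (‖ψ b‖ + ∫ x in a..b, ‖ψ' x‖) :=
  norm_integral_smul_le_of_norm_primitive_le hab hψ hψψ' hψ' (by fun_prop) fun t ht => by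
    have hsub : Icc a t ⊆ Icc a b := Icc_subset_Icc_right ht.2
    have hsub' : Ioo a t ⊆ Ioo a b := Ioo_subset_Ioo_right ht.2
    exact norm_integral_cexp_le_of_le_abs_second_deriv ht.1 hlam (hΦ.mono hsub) (hΦ'.mono hsub)
      (fun x hx => hΦΦ' x (hsub' hx)) (fun x hx => hΦ'Φ'' x (hsub' hx))
      fun x hx => hΦ''_ge x (hsub' hx)

theorem van_der_corput_second_order :
    ∃ C : ℝ, 0 < C ∧
      ∀ (a b lam : ℝ), a ≤ b → 0 < lam →
      ∀ (Φ : ℝ → ℝ) (ψ : ℝ → ℂ),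
        ContDiffOn ℝ 2 Φ (Icc a b) →
        (∀ ξ ∈ Icc a b, lam ≤ |deriv (deriv Φ) ξ|) →
        ContDiffOn ℝ 1 ψ (Icc a b) →
        ‖∫ ξ in a..b, ψ ξ * Complex.exp (Complex.I * (Φ ξ : ℂ))‖ ≤
          C * lam ^ (-(1 : ℝ) / 2) *
            ((⨆ ξ : Icc a b, ‖ψ ξ.1‖) + ∫ ξ in a..b, ‖deriv ψ ξ‖) := by
  refine ⟨10, by norm_num, fun a b lam hab hlam Φ ψ hΦ hΦ''_ge hψ => ?_⟩
  have hM : 0 ≤ ⨆ ξ : Icc a b, ‖ψ ξ.1‖ := Real.iSup_nonneg fun _ => norm_nonneg _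
  rcases hab.eq_or_lt with rfl | hab
  · simp only [integral_same, norm_zero, add_zero]
    positivity
  have hIcc := uniqueDiffOn_Icc hab
  -- `deriv Φ` is junk at `a` and `b`; the one-sided `derivWithin Φ (Icc a b)` is continuous there
  have hΦ' : ContDiffOn ℝ 1 (derivWithin Φ (Icc a b)) (Icc a b) :=
    hΦ.derivWithin hIcc (by norm_num)
  have hΦ'Φ'' : ∀ x ∈ Ioo a b, HasDerivAt (derivWithin Φ (Icc a b)) (deriv (deriv Φ) x) x :=
    fun x hx => derivWithin_derivWithin_Icc_of_mem_Ioo (f := Φ) hx ▸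
      (hΦ'.differentiableOn one_ne_zero).hasDerivAt_derivWithin_Icc hx
  have hψb : ‖ψ b‖ ≤ ⨆ ξ : Icc a b, ‖ψ ξ.1‖ :=
    le_ciSup (isCompact_range hψ.continuousOn.norm.domRestrict).bddAbove ⟨b, right_mem_Icc.2 hab.le⟩
  have hψ' : ∫ x in a..b, ‖deriv ψ x‖ = ∫ x in a..b, ‖derivWithin ψ (Icc a b) x‖ :=
    integral_congr_Ioo_of_le hab.le fun x hx => by
      rw [(derivWithin_Icc_eventuallyEq_deriv hx).eq_of_nhds]
  have hrpow : lam ^ (-(1 : ℝ) / 2) = 1 / √lam := by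
    rw [Real.sqrt_eq_rpow, one_div, ← Real.rpow_neg hlam.le, neg_div]
  rw [hψ', hrpow, ← mul_div_assoc, mul_one]
  calc _ ≤ 10 / √lam * (‖ψ b‖ + ∫ x in a..b, ‖derivWithin ψ (Icc a b) x‖) :=
        norm_integral_mul_cexp_le_of_le_abs_second_deriv hab.le hlam hΦ.continuousOn
          hΦ'.continuousOn
          (fun x hx => (hΦ.differentiableOn two_ne_zero).hasDerivAt_derivWithin_Icc hx)
          hΦ'Φ'' (fun x hx => hΦ''_ge x (Ioo_subset_Icc_self hx)) hψ.continuousOn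
          (fun x hx => (hψ.differentiableOn one_ne_zero).hasDerivAt_derivWithin_Icc hx)
          ((hψ.continuousOn_derivWithin hIcc le_rfl).intervalIntegrable_of_Icc hab.le)
    _ ≤ _ := by gcongr
end

section
/- If g : [0,T] → [0,∞) is continuous, nondecreasing, g(0) = 0, and satisfies g(T') ≤ A·√T'·e^{c·g(T')}·(1 + g(T')) for all T' ∈ [0,T], where A, c > 0, then there exist T₀ = T₀(A, c) > 0 and C₀ = C₀(A, c) such that g(T') ≤ C₀ for all T' ∈ [0, min(T, T₀)]. -/
/-!
While `g` stays below the level `1` there is nothing to prove; to exceed it, the continuous `g`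
(starting from `g 0 = 0`) must reach `1` at some `s`, and there the a priori inequality reads
`1 ≤ 2 A e^c √s`. This is impossible once `s ≤ T₀ = (4 A e^c)⁻²`, so `C₀ = 1` works up to `T₀`.
-/

open Set Real

theorem ContinuousOn.le_of_forall_ne {g : ℝ → ℝ} {a t L : ℝ} (hat : a ≤ t)
    (hg : ContinuousOn g (Icc a t)) (ha : g a ≤ L) (hne : ∀ s ∈ Icc a t, g s ≠ L) :
    g t ≤ L := by
  by_contra! hlt
  obtain ⟨s, hs, hgs⟩ := intermediate_value_Icc hat hg ⟨ha, hlt.le⟩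
  exact hne s hs hgs

lemma bootstrap_rhs_at_one_lt_one {A c s : ℝ} (hA : 0 < A) (hs : s ≤ (4 * A * exp c)⁻¹ ^ 2) :
    A * √s * exp (c * 1) * (1 + 1) < 1 := by
  have hsqrt : √s ≤ (4 * A * exp c)⁻¹ := Real.sqrt_le_iff.2 ⟨by positivity, hs⟩
  calc A * √s * exp (c * 1) * (1 + 1) ≤ A * (4 * A * exp c)⁻¹ * exp c * 2 := by
        rw [mul_one, one_add_one_eq_two]; gcongr
    _ = 1 / 2 := by field_simp; ring
    _ < 1 := by norm_num

theorem bootstrap_a_priori_bound_general (A c : ℝ) (hA : 0 < A) :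
    ∃ T₀ : ℝ, 0 < T₀ ∧ ∃ C₀ : ℝ,
      ∀ (T : ℝ) (g : ℝ → ℝ), 0 ≤ T →
        ContinuousOn g (Icc 0 T) →
        MonotoneOn g (Icc 0 T) →
        g 0 = 0 →
        (∀ t ∈ Icc 0 T, 0 ≤ g t) →
        (∀ T' ∈ Icc 0 T, g T' ≤ A * Real.sqrt T' * Real.exp (c * g T') * (1 + g T')) →
        ∀ t ∈ Icc 0 (min T T₀), g t ≤ C₀ := by
  refine ⟨(4 * A * exp c)⁻¹ ^ 2, by positivity, 1, ?_⟩
  intro T g _ hcont _ hg0 _ hineq t ht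
  have htT : t ≤ T := ht.2.trans (min_le_left _ _)
  refine ContinuousOn.le_of_forall_ne ht.1 (hcont.mono (Icc_subset_Icc_right htT))
    (hg0.trans_le zero_le_one) fun s hs hgs => ?_
  have hrhs := hineq s ⟨hs.1, hs.2.trans htT⟩
  rw [hgs] at hrhs
  exact (bootstrap_rhs_at_one_lt_one hA (hs.2.trans (ht.2.trans (min_le_right _ _)))).not_ge hrhs

theorem bootstrap_a_priori_bound (A c : ℝ) (hA : 0 < A) (hc : 0 < c) :
    ∃ T₀ : ℝ, 0 < T₀ ∧ ∃ C₀ : ℝ,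
      ∀ (T : ℝ) (g : ℝ → ℝ), 0 ≤ T →
        ContinuousOn g (Icc 0 T) →
        MonotoneOn g (Icc 0 T) →
        g 0 = 0 →
        (∀ t ∈ Icc 0 T, 0 ≤ g t) →
        (∀ T' ∈ Icc 0 T, g T' ≤ A * Real.sqrt T' * Real.exp (c * g T') * (1 + g T')) →
        ∀ t ∈ Icc 0 (min T T₀), g t ≤ C₀ :=
  bootstrap_a_priori_bound_general A c hA
end
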